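/- arXiv:2307.07490 — 5 statements merged into one kernel-verified Lean document; each statement's English description precedes it below -/
import Mathlib

section
/- The index of the limit progress relation is at most the index of the syntactic progress relation, which in turn is at most the index of ∼ times the index of the limit progress relation: |≈ᵘ_L| ≤ |≈ᵘ_S| ≤ |∼|·|≈ᵘ_L|. -/
/-- Concatenation of a finite word `u` with an ω-word `w`. -/
def finCat {α : Type*} (u : List α) (w : ℕ → α) : ℕ → α :=
  fun n => if h : n < u.length then u.get ⟨n, h⟩ else w (n - u.length)

/-- The ω-word `v^ω`, the infinite repetition of a nonempty finite word `v`. -/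
def repWord {α : Type*} (v : List α) (h : 0 < v.length) : ℕ → α :=
  fun n => v.get ⟨n % v.length, Nat.mod_lt n h⟩

/-- `u · v^ω ∈ L` (this requires `v` to be nonempty). -/
def OmegaIn {α : Type*} (L : Set (ℕ → α)) (u v : List α) : Prop :=
  ∃ h : 0 < v.length, finCat u (repWord v h) ∈ L

/-- The leading right congruence `u₁ ∼ u₂`. -/
def Leading {α : Type*} (L : Set (ℕ → α)) (u₁ u₂ : List α) : Prop :=
  ∀ w : ℕ → α, finCat u₁ w ∈ L ↔ finCat u₂ w ∈ L

/-- The limit progress relation `x ≈ᵘ_L y`. -/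
def LimitRel {α : Type*} (L : Set (ℕ → α)) (u x y : List α) : Prop :=
  ∀ v : List α,
    (Leading L (u ++ x ++ v) u → OmegaIn L u (x ++ v)) ↔
    (Leading L (u ++ y ++ v) u → OmegaIn L u (y ++ v))

/-- The syntactic progress relation `x ≈ᵘ_S y`. -/
def SynRel {α : Type*} (L : Set (ℕ → α)) (u x y : List α) : Prop :=
  Leading L (u ++ x) (u ++ y) ∧
  ∀ v : List α, Leading L (u ++ x ++ v) u →
    (OmegaIn L u (x ++ v) ↔ OmegaIn L u (y ++ v))

/-- The periodic progress relation `x ≈ᵘ_P y`. -/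
def PerRel {α : Type*} (L : Set (ℕ → α)) (u x y : List α) : Prop :=
  ∀ v : List α, OmegaIn L u (x ++ v) ↔ OmegaIn L u (y ++ v)

/-- The recurrent progress relation `x ≈ᵘ_R y`. -/
def RecRel {α : Type*} (L : Set (ℕ → α)) (u x y : List α) : Prop :=
  ∀ v : List α,
    (Leading L (u ++ x ++ v) u ∧ OmegaIn L u (x ++ v)) ↔
    (Leading L (u ++ y ++ v) u ∧ OmegaIn L u (y ++ v))

/-- The progress right pro-congruence `x ≈ᵘ_N y`. -/
def ProRel {α : Type*} (L : Set (ℕ → α)) (u x y : List α) : Prop :=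
  ∀ v : List α,
    (Leading L (u ++ x ++ v) u ∧ Leading L (u ++ y ++ v) u) →
    (OmegaIn L u (x ++ v) ↔ OmegaIn L u (y ++ v))

section Aux

variable {α : Type*} {L : Set (ℕ → α)} {u : List α}

theorem finCat_append (a b : List α) (w : ℕ → α) :
    finCat (a ++ b) w = finCat a (finCat b w) := by
  funext n
  simp only [finCat, List.length_append, List.get_eq_getElem]
  by_cases h1 : n < a.length
  · rw [dif_pos (by omega), dif_pos h1, List.getElem_append_left h1]
  · rw [dif_neg h1]
    by_cases h2 : n < a.length + b.length
    · rw [dif_pos h2, dif_pos (by omega), List.getElem_append_right (by omega)]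
    · rw [dif_neg h2, dif_neg (by omega), Nat.sub_sub]

theorem Leading.refl (s : List α) : Leading L s s := fun _ => Iff.rfl

theorem Leading.symm' {s t : List α} (h : Leading L s t) : Leading L t s :=
  fun w => (h w).symm

theorem Leading.trans' {s t r : List α} (h1 : Leading L s t) (h2 : Leading L t r) :
    Leading L s r := fun w => (h1 w).trans (h2 w)

theorem Leading.append {s t : List α} (h : Leading L s t) (v : List α) :
    Leading L (s ++ v) (t ++ v) := by
  intro w
  rw [finCat_append, finCat_append]
  exact h _

/-- key congruence: `u++x ∼ u++y → u++x++v ∼ u++y++v` -/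
theorem lead_cong {x y : List α} (h : Leading L (u ++ x) (u ++ y)) (v : List α) :
    Leading L (u ++ x ++ v) (u ++ y ++ v) := h.append v

theorem synRel_refl (x : List α) : SynRel L u x x :=
  ⟨Leading.refl _, fun _ _ => Iff.rfl⟩

theorem synRel_symm {x y : List α} (h : SynRel L u x y) : SynRel L u y x := by
  refine ⟨h.1.symm', fun v hv => ?_⟩
  exact (h.2 v ((lead_cong h.1 v).trans' hv)).symm

theorem synRel_trans {x y z : List α} (h1 : SynRel L u x y) (h2 : SynRel L u y z) :
    SynRel L u x z := by
  refine ⟨h1.1.trans' h2.1, fun v hv => ?_⟩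
  exact (h1.2 v hv).trans (h2.2 v (((lead_cong h1.1 v).symm').trans' hv))

theorem limitRel_refl (x : List α) : LimitRel L u x x := fun _ => Iff.rfl

theorem limitRel_symm {x y : List α} (h : LimitRel L u x y) : LimitRel L u y x :=
  fun v => (h v).symm

theorem limitRel_trans {x y z : List α} (h1 : LimitRel L u x y) (h2 : LimitRel L u y z) :
    LimitRel L u x z := fun v => (h1 v).trans (h2 v)

theorem syn_to_limit {x y : List α} (h : SynRel L u x y) : LimitRel L u x y := by
  intro v
  have hl : Leading L (u ++ x ++ v) u ↔ Leading L (u ++ y ++ v) u :=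
    ⟨fun hv => ((lead_cong h.1 v).symm').trans' hv,
     fun hv => (lead_cong h.1 v).trans' hv⟩
  constructor
  · intro hx hvy
    exact (h.2 v (hl.mpr hvy)).mp (hx (hl.mpr hvy))
  · intro hy hvx
    exact (h.2 v hvx).mpr (hy (hl.mp hvx))

theorem to_syn {x y : List α} (hlead : Leading L (u ++ x) (u ++ y))
    (hlim : LimitRel L u x y) : SynRel L u x y := by
  refine ⟨hlead, fun v hv => ?_⟩
  have hvy : Leading L (u ++ y ++ v) u := ((lead_cong hlead v).symm').trans' hv
  constructor
  · intro ox
    exact (hlim v).mp (fun _ => ox) hvy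
  · intro oy
    exact (hlim v).mpr (fun _ => oy) hv

theorem limit_class_eq {x y : List α} (h : LimitRel L u x y) :
    {z | LimitRel L u x z} = {z | LimitRel L u y z} := by
  ext z
  exact ⟨fun hz => limitRel_trans (limitRel_symm h) hz, fun hz => limitRel_trans h hz⟩

theorem syn_class_eq {x y : List α} (h : SynRel L u x y) :
    {z | SynRel L u x z} = {z | SynRel L u y z} := by
  ext z
  exact ⟨fun hz => synRel_trans (synRel_symm h) hz, fun hz => synRel_trans h hz⟩

theorem lead_class_eq {s t : List α} (h : Leading L s t) :
    {r | Leading L s r} = {r | Leading L t r} := by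
  ext r
  exact ⟨fun hr => (h.symm').trans' hr, fun hr => h.trans' hr⟩

end Aux

theorem limit_syntactic_index_comparison {α : Type*} (L : Set (ℕ → α)) (u : List α)
    (hfin : (Set.range fun u₁ => {u₂ | Leading L u₁ u₂}).Finite) :
    Cardinal.mk (Set.range fun x => {y | LimitRel L u x y}) ≤
      Cardinal.mk (Set.range fun x => {y | SynRel L u x y}) ∧
    Cardinal.mk (Set.range fun x => {y | SynRel L u x y}) ≤
      Cardinal.mk (Set.range fun u₁ => {u₂ | Leading L u₁ u₂}) *
        Cardinal.mk (Set.range fun x => {y | LimitRel L u x y}) := by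
  constructor
  · -- surjection from syn classes onto limit classes
    apply Cardinal.mk_le_of_surjective
      (f := fun s : Set.range (fun x => {y | SynRel L u x y}) =>
        (⟨{y | LimitRel L u s.2.choose y}, Set.mem_range_self _⟩ :
          Set.range (fun x => {y | LimitRel L u x y})))
    rintro ⟨T, x, rfl⟩
    refine ⟨⟨{y | SynRel L u x y}, x, rfl⟩, ?_⟩
    apply Subtype.ext
    have key : ∀ s : Set.range (fun x => {y | SynRel L u x y}),
        {y | SynRel L u s.2.choose y} = s.1 := fun s => s.2.choose_spec
    have hspec := key ⟨{y | SynRel L u x y}, x, rfl⟩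
    have hx := (Set.ext_iff.mp hspec x).mpr (synRel_refl x)
    exact limit_class_eq (syn_to_limit hx)
  · -- injection from syn classes into lead classes × limit classes
    rw [Cardinal.mul_def]
    apply Cardinal.mk_le_of_injective
      (f := fun s : Set.range (fun x => {y | SynRel L u x y}) =>
        ((⟨{t | Leading L (u ++ s.2.choose) t}, Set.mem_range_self _⟩,
          ⟨{y | LimitRel L u s.2.choose y}, Set.mem_range_self _⟩) :
          Set.range (fun u₁ => {u₂ | Leading L u₁ u₂}) ×
          Set.range (fun x => {y | LimitRel L u x y})))
    rintro ⟨S1, hS1⟩ ⟨S2, hS2⟩ heq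
    simp only [Prod.mk.injEq, Subtype.mk.injEq] at heq
    obtain ⟨h1, h2⟩ := heq
    apply Subtype.ext
    show S1 = S2
    have e1 : {y | SynRel L u hS1.choose y} = S1 := hS1.choose_spec
    have e2 : {y | SynRel L u hS2.choose y} = S2 := hS2.choose_spec
    rw [← e1, ← e2]
    apply syn_class_eq
    apply to_syn
    · have : u ++ hS2.choose ∈ {t | Leading L (u ++ hS1.choose) t} := by
        rw [h1]; exact Leading.refl _
      exact this
    · have : hS2.choose ∈ {y | LimitRel L u hS1.choose y} := by
        rw [h2]; exact limitRel_refl _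
      exact this
end

section
/- The language V_u = {x ∈ Σ* : ∀ v ∈ Σ*, u·x·v ∼ u → u·(x·v)^ω ∈ L} is co-safety, i.e., closed under extension: if x ∈ V_u then x·w ∈ V_u for all w ∈ Σ*. -/
theorem Vu_cosafety {α : Type*} (L : Set (ℕ → α)) (u x w : List α)
    (hx : ∀ v : List α, Leading L (u ++ x ++ v) u → OmegaIn L u (x ++ v)) :
    ∀ v : List α, Leading L (u ++ (x ++ w) ++ v) u → OmegaIn L u ((x ++ w) ++ v) := by
  intro v h
  have := hx (w ++ v) (by simpa [List.append_assoc] using h)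
  simpa [List.append_assoc] using this
end

section
/- If two ω-regular languages (languages recognized by nondeterministic Büchi automata) contain the same ultimately periodic words, then they are equal. -/
/-- A nondeterministic Büchi automaton with transition-based acceptance. -/
structure NBA (α : Type*) where
  Q : Type
  fin : Fintype Q
  init : Q
  trans : Q → α → Set Q
  acc : Set (Q × α × Q)

/-- An ω-word is accepted by an NBA if some run visits accepting transitions infinitely often. -/
def NBA.Accepts {α : Type*} (A : NBA α) (w : ℕ → α) : Prop :=
  ∃ ρ : ℕ → A.Q, ρ 0 = A.init ∧ (∀ n, ρ (n + 1) ∈ A.trans (ρ n) (w n)) ∧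
    ∀ N : ℕ, ∃ n, N ≤ n ∧ (ρ n, w n, ρ (n + 1)) ∈ A.acc

/-- An ω-language is ω-regular if it is recognized by some NBA. -/
def OmegaRegular {α : Type*} (L : Set (ℕ → α)) : Prop :=
  ∃ A : NBA α, ∀ w, w ∈ L ↔ A.Accepts w

/-- Ultimately periodic ω-words. -/
def IsUP {α : Type*} (w : ℕ → α) : Prop :=
  ∃ (u v : List α) (h : 0 < v.length), w = finCat u (repWord v h)

/-!
Colour each pair `i < j` by the profiles, in both automata, of the factor `w[i, j)` of `w ∈ L₁`.
A Ramsey argument (here through a nonprincipal ultrafilter) yields cut points `g 0 < g 1 < ⋯`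
such that every factor `w[g k, g (k + 1))` has the profiles of `v = w[g 0, g 1)`. Whether an
automaton accepts an ω-word cut into finite pieces depends only on the profiles of the pieces,
so each automaton accepts `w` iff it accepts the ultimately periodic word `w[0, g 0) v^ω`.
That word lies in `L₁`, hence in `L₂`, hence so does `w`.
-/

open Filter

theorem exists_strictMono_forall_apply_succ_eq {C : Type*} [Finite C] (f : ℕ → ℕ → C) :
    ∃ g : ℕ → ℕ, StrictMono g ∧ ∃ c, ∀ k, f (g k) (g (k + 1)) = c := by
  set U := hyperfilter ℕ
  -- Colour `i` by the colour `f i j` that `U`-almost every `j` gets, then follow `U`-generic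
  -- successors inside one colour class.
  have hcol : ∀ i, ∃ c, ∀ᶠ j in (U : Filter ℕ), f i j = c := fun i =>
    U.eventually_exists_iff.mp (.of_forall fun j => ⟨_, rfl⟩)
  choose col hcol using hcol
  obtain ⟨c, hc⟩ : ∃ c, ∀ᶠ i in (U : Filter ℕ), col i = c :=
    U.eventually_exists_iff.mp (.of_forall fun i => ⟨_, rfl⟩)
  have hnext : ∀ i, ∃ j, i < j ∧ col j = c ∧ f i j = col i := fun i =>
    (((eventually_gt_atTop i).filter_mono Nat.hyperfilter_le_atTop).and (hc.and (hcol i))).exists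
  choose next hlt hnext_col hnext_f using hnext
  obtain ⟨i₀, hi₀⟩ := hc.exists
  have hg_col : ∀ k, col (next^[k] i₀) = c
    | 0 => hi₀
    | k + 1 => by rw [Function.iterate_succ_apply']; exact hnext_col _
  refine ⟨fun k => next^[k] i₀, strictMono_nat_of_lt_succ fun k => ?_, c, fun k => ?_⟩
  · rw [Function.iterate_succ_apply']
    exact hlt _
  · change f _ (next^[k + 1] i₀) = c
    rw [Function.iterate_succ_apply', hnext_f, hg_col]

theorem StrictMono.update_zero {f : ℕ → ℕ} (hf : StrictMono f) :
    StrictMono (Function.update f 0 0) := by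
  refine strictMono_nat_of_lt_succ fun k => ?_
  rcases k with _ | k
  · simpa using (Nat.zero_le _).trans_lt (hf zero_lt_one)
  · simpa using hf (Nat.lt_succ_self (k + 1))

theorem StrictMono.exists_le_lt_succ {σ : ℕ → ℕ} (hσ : StrictMono σ) (hσ0 : σ 0 = 0) (n : ℕ) :
    ∃ k, σ k ≤ n ∧ n < σ (k + 1) := by
  induction n with
  | zero => exact ⟨0, hσ0.le, by simpa [hσ0] using hσ zero_lt_one⟩
  | succ n ih =>
    obtain ⟨k, hk, hnk⟩ := ih
    by_cases hn : n + 1 < σ (k + 1)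
    · exact ⟨k, by omega, hn⟩
    · exact ⟨k + 1, by omega, by have := hσ (Nat.lt_add_one (k + 1)); omega⟩

theorem StrictMono.eq_of_le_lt_succ {σ : ℕ → ℕ} (hσ : StrictMono σ) {n k l : ℕ}
    (hk : σ k ≤ n) (hnk : n < σ (k + 1)) (hl : σ l ≤ n) (hnl : n < σ (l + 1)) : k = l := by
  by_contra hne
  rcases Nat.lt_or_gt_of_ne hne with h | h
  · have := hσ.monotone (show k + 1 ≤ l by omega); omega
  · have := hσ.monotone (show l + 1 ≤ k by omega); omega

section

variable {α : Type*}

def factor (w : ℕ → α) (i j : ℕ) : List α := List.ofFn fun n : Fin (j - i) => w (i + n)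

@[simp] theorem length_factor (w : ℕ → α) (i j : ℕ) : (factor w i j).length = j - i :=
  List.length_ofFn

@[simp] theorem getElem_factor (w : ℕ → α) (i j n : ℕ) (h : n < (factor w i j).length) :
    (factor w i j)[n] = w (i + n) :=
  List.getElem_ofFn _

theorem factor_congr {w w' : ℕ → α} {i j : ℕ} (h : ∀ n, i ≤ n → n < j → w n = w' n) :
    factor w i j = factor w' i j :=
  List.ext_getElem (by simp) fun n h₁ _ => by
    simp only [getElem_factor]
    exact h _ (Nat.le_add_right i n) (by rw [length_factor] at h₁; omega)

theorem finCat_apply_of_lt (u : List α) (r : ℕ → α) {n : ℕ} (h : n < u.length) :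
    finCat u r n = u[n] := by
  simp [finCat, h]

theorem finCat_apply_add (u : List α) (r : ℕ → α) (n : ℕ) : finCat u r (u.length + n) = r n := by
  simp [finCat]

theorem repWord_apply (v : List α) (hv : 0 < v.length) (n : ℕ) :
    repWord v hv n = v[n % v.length]'(Nat.mod_lt n hv) :=
  rfl

theorem factor_finCat_repWord (u v : List α) (hv : 0 < v.length) (k : ℕ) :
    factor (finCat u (repWord v hv)) (u.length + k * v.length) (u.length + (k + 1) * v.length)
      = v := by
  refine List.ext_getElem (by simp only [length_factor, Nat.succ_mul]; omega) fun n h₁ h₂ => ?_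
  rw [getElem_factor, Nat.add_assoc, finCat_apply_add, repWord_apply]
  simp [Nat.add_mod, Nat.mod_eq_of_lt h₂]

theorem finCat_factor_repWord_factor_of_lt {w : ℕ → α} {i j n : ℕ} (hv : 0 < (factor w i j).length)
    (hn : n < j) : finCat (factor w 0 i) (repWord (factor w i j) hv) n = w n := by
  rcases lt_or_ge n i with h | h
  · simp [finCat_apply_of_lt _ _ (by simpa using h : n < (factor w 0 i).length)]
  · obtain ⟨m, rfl⟩ := Nat.exists_eq_add_of_le h
    have := finCat_apply_add (factor w 0 i) (repWord _ hv) m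
    rw [length_factor, Nat.sub_zero] at this
    have hm : m < j - i := by omega
    simp [this, repWord_apply, Nat.mod_eq_of_lt hm]

namespace NBA

variable (A : NBA α)

/-- The profile of `x`: which states `x` connects, through an accepting transition
(`acc = True`) or not. -/
def Reaches (x : List α) (p q : A.Q) (acc : Prop) : Prop :=
  ∃ ρ : ℕ → A.Q, ρ 0 = p ∧ ρ x.length = q ∧
    (∀ n (h : n < x.length), ρ (n + 1) ∈ A.trans (ρ n) x[n]) ∧
    (acc → ∃ n, ∃ h : n < x.length, (ρ n, x[n], ρ (n + 1)) ∈ A.acc)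

theorem reaches_factor_iff {w : ℕ → α} {i j : ℕ} (hij : i ≤ j) {p q : A.Q} {acc : Prop} :
    A.Reaches (factor w i j) p q acc ↔ ∃ ρ : ℕ → A.Q, ρ i = p ∧ ρ j = q ∧
      (∀ n, i ≤ n → n < j → ρ (n + 1) ∈ A.trans (ρ n) (w n)) ∧
      (acc → ∃ n, i ≤ n ∧ n < j ∧ (ρ n, w n, ρ (n + 1)) ∈ A.acc) := by
  simp only [Reaches, length_factor, getElem_factor]
  constructor
  · rintro ⟨ρ, hp, hq, hstep, hacc⟩
    refine ⟨fun m => ρ (m - i), by simpa, by simpa using hq, fun n hin hnj => ?_, fun ha => ?_⟩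
    · obtain ⟨m, rfl⟩ := Nat.exists_eq_add_of_le hin
      show ρ (i + m + 1 - i) ∈ A.trans (ρ (i + m - i)) (w (i + m))
      rw [Nat.add_assoc, Nat.add_sub_cancel_left, Nat.add_sub_cancel_left]
      exact hstep m (by omega)
    · obtain ⟨n, hn, hacc⟩ := hacc ha
      refine ⟨i + n, by omega, by omega, ?_⟩
      simp only [Nat.add_assoc, Nat.add_sub_cancel_left]
      exact hacc
  · rintro ⟨ρ, hp, hq, hstep, hacc⟩
    refine ⟨fun m => ρ (i + m), by simpa, by simpa [Nat.add_sub_cancel' hij],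
      fun n _ => hstep _ (by omega) (by omega), fun ha => ?_⟩
    obtain ⟨n, hin, hnj, hacc⟩ := hacc ha
    obtain ⟨m, rfl⟩ := Nat.exists_eq_add_of_le hin
    exact ⟨m, by omega, by simpa [Nat.add_assoc] using hacc⟩

theorem accepts_iff_exists_reaches {w : ℕ → α} {σ : ℕ → ℕ} (hσ : StrictMono σ) (hσ0 : σ 0 = 0) :
    A.Accepts w ↔ ∃ (q : ℕ → A.Q) (F : Set ℕ), q 0 = A.init ∧ F.Infinite ∧
      ∀ k, A.Reaches (factor w (σ k) (σ (k + 1))) (q k) (q (k + 1)) (k ∈ F) := by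
  simp only [A.reaches_factor_iff (hσ.monotone (Nat.le_add_right _ 1))]
  constructor
  · rintro ⟨ρ, h0, hstep, hacc⟩
    refine ⟨fun k => ρ (σ k), {k | ∃ n, σ k ≤ n ∧ n < σ (k + 1) ∧ (ρ n, w n, ρ (n + 1)) ∈ A.acc},
      by simp [hσ0, h0], ?_, fun k => ⟨ρ, rfl, rfl, fun n _ _ => hstep n, id⟩⟩
    refine Nat.frequently_atTop_iff_infinite.mp (frequently_atTop.mpr fun N => ?_)
    obtain ⟨n, hNn, hn⟩ := hacc (σ N)
    obtain ⟨k, hk, hnk⟩ := hσ.exists_le_lt_succ hσ0 n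
    refine ⟨k, ?_, n, hk, hnk, hn⟩
    by_contra! hkN
    have := hσ.monotone (show k + 1 ≤ N by omega)
    omega
  · rintro ⟨q, F, hq0, hF, hq⟩
    choose ρ hρp hρq hρstep hρacc using hq
    choose idx hidx using hσ.exists_le_lt_succ hσ0
    have hidx_eq : ∀ {n k}, σ k ≤ n → n < σ (k + 1) → idx n = k := fun h₁ h₂ =>
      hσ.eq_of_le_lt_succ (hidx _).1 (hidx _).2 h₁ h₂
    -- the piece `ρ k` ends where `ρ (k + 1)` starts, so gluing them gives a run
    have hsucc : ∀ n, ρ (idx (n + 1)) (n + 1) = ρ (idx n) (n + 1) := by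
      intro n
      obtain ⟨h₁, h₂⟩ := hidx n
      rcases (Nat.succ_le_of_lt h₂).lt_or_eq with h | h
      · rw [hidx_eq (by omega) h]
      · rw [hidx_eq h.symm.le (h ▸ hσ (Nat.lt_add_one _)), show n + 1 = σ (idx n + 1) from h, hρp,
          hρq]
    refine ⟨fun n => ρ (idx n) n, ?_, fun n => ?_, fun N => ?_⟩
    · have h0 : idx 0 = 0 := hidx_eq hσ0.le (by simpa [hσ0] using hσ zero_lt_one)
      simpa [h0, hσ0, hq0] using hρp 0
    · simpa only [hsucc] using hρstep _ n (hidx n).1 (hidx n).2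
    · obtain ⟨k, hkF, hNk⟩ := hF.exists_gt N
      obtain ⟨n, h₁, h₂, hacc⟩ := hρacc k hkF
      refine ⟨n, hNk.le.trans ((hσ.id_le k).trans h₁), ?_⟩
      simpa only [hsucc, hidx_eq h₁ h₂] using hacc

theorem accepts_iff_of_reaches_factor_eq {w w' : ℕ → α} {σ τ : ℕ → ℕ}
    (hσ : StrictMono σ) (hσ0 : σ 0 = 0) (hτ : StrictMono τ) (hτ0 : τ 0 = 0)
    (h : ∀ k, A.Reaches (factor w (σ k) (σ (k + 1))) = A.Reaches (factor w' (τ k) (τ (k + 1)))) :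
    A.Accepts w ↔ A.Accepts w' := by
  rw [A.accepts_iff_exists_reaches hσ hσ0, A.accepts_iff_exists_reaches hτ hτ0]
  simp only [h]

theorem accepts_iff_accepts_finCat_repWord {w : ℕ → α} {g : ℕ → ℕ} (hg : StrictMono g)
    (hv : 0 < (factor w (g 0) (g 1)).length)
    (hg_reaches : ∀ k, A.Reaches (factor w (g k) (g (k + 1))) = A.Reaches (factor w (g 0) (g 1))) :
    A.Accepts w ↔ A.Accepts (finCat (factor w 0 (g 0)) (repWord (factor w (g 0) (g 1)) hv)) := by
  -- Cut `w` at `0, g 1, g 2, …` and `u v^ω` (`u = w[0, g 0)`, `v = w[g 0, g 1)`) at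
  -- `0, |u| + |v|, |u| + 2|v|, …`: the first pieces are both `w[0, g 1)`, all others have the
  -- profile of `v`.
  have hτ : StrictMono fun k => g 0 + k * (factor w (g 0) (g 1)).length :=
    strictMono_nat_of_lt_succ fun k => by rw [Nat.succ_mul]; omega
  refine A.accepts_iff_of_reaches_factor_eq hg.update_zero (by simp) hτ.update_zero (by simp)
    fun k => ?_
  rcases k with _ | k
  · have h1 : g 0 + 1 * (factor w (g 0) (g 1)).length = g 1 := by
      have := hg zero_lt_one
      simp only [length_factor]
      omega
    simp only [Function.update_self, zero_add, ne_eq, one_ne_zero, not_false_eq_true,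
      Function.update_of_ne, h1]
    rw [factor_congr fun n _ hn => (finCat_factor_repWord_factor_of_lt hv hn).symm]
  · simp only [ne_eq, Nat.add_one_ne_zero, not_false_eq_true, Function.update_of_ne,
      hg_reaches]
    have := factor_finCat_repWord (factor w 0 (g 0)) _ hv (k + 1)
    rw [length_factor, Nat.sub_zero] at this
    rw [this]

end NBA

theorem subset_of_UP_subset {L₁ L₂ : Set (ℕ → α)} (h₁ : OmegaRegular L₁) (h₂ : OmegaRegular L₂)
    (hUP : {w ∈ L₁ | IsUP w} ⊆ {w ∈ L₂ | IsUP w}) : L₁ ⊆ L₂ := by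
  intro w hw
  obtain ⟨A₁, hA₁⟩ := h₁
  obtain ⟨A₂, hA₂⟩ := h₂
  have := A₁.fin
  have := A₂.fin
  obtain ⟨g, hg, c, hc⟩ := exists_strictMono_forall_apply_succ_eq fun i j =>
    (A₁.Reaches (factor w i j), A₂.Reaches (factor w i j))
  have hv : 0 < (factor w (g 0) (g 1)).length := by simpa using hg zero_lt_one
  have h₁' := A₁.accepts_iff_accepts_finCat_repWord hg hv fun k =>
    congrArg Prod.fst ((hc k).trans (hc 0).symm)
  have h₂' := A₂.accepts_iff_accepts_finCat_repWord hg hv fun k =>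
    congrArg Prod.snd ((hc k).trans (hc 0).symm)
  have hw' := hUP ⟨(hA₁ _).2 (h₁'.1 ((hA₁ w).1 hw)), _, _, hv, rfl⟩
  exact (hA₂ w).2 (h₂'.2 ((hA₂ _).1 hw'.1))

end

theorem omegaRegular_eq_of_UP_eq_general {α : Type*} (L₁ L₂ : Set (ℕ → α))
    (h₁ : OmegaRegular L₁) (h₂ : OmegaRegular L₂)
    (hUP : {w ∈ L₁ | IsUP w} = {w ∈ L₂ | IsUP w}) : L₁ = L₂ :=
  (subset_of_UP_subset h₁ h₂ hUP.le).antisymm (subset_of_UP_subset h₂ h₁ hUP.ge)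

theorem omegaRegular_eq_of_UP_eq {α : Type*} [Fintype α] (L₁ L₂ : Set (ℕ → α))
    (h₁ : OmegaRegular L₁) (h₂ : OmegaRegular L₂)
    (hUP : {w ∈ L₁ | IsUP w} = {w ∈ L₂ | IsUP w}) : L₁ = L₂ :=
  omegaRegular_eq_of_UP_eq_general L₁ L₂ h₁ h₂ hUP
end

section
/- Every nonempty ω-regular language contains at least one ultimately periodic word. -/
theorem omegaRegular_nonempty_has_UP {α : Type*} [Fintype α] (L : Set (ℕ → α))
    (hreg : OmegaRegular L) (hne : L.Nonempty) : ∃ w ∈ L, IsUP w := by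
  classical
  obtain ⟨A, hA⟩ := hreg
  obtain ⟨w, hw⟩ := hne
  obtain ⟨ρ, hρ0, hρt, hρa⟩ := (hA w).1 hw
  haveI := A.fin
  set S : Set ℕ := {n | (ρ n, w n, ρ (n + 1)) ∈ A.acc} with hSdef
  have hS : S.Infinite := by
    apply Set.infinite_of_not_bddAbove
    rintro ⟨N, hN⟩
    obtain ⟨n, hn1, hn2⟩ := hρa (N + 1)
    have := hN hn2
    omega
  -- find a state with infinitely many accepting positions
  obtain ⟨q, hq⟩ : ∃ q : A.Q, {n ∈ S | ρ n = q}.Infinite := by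
    by_contra hcon
    push_neg at hcon
    have : S ⊆ ⋃ q : A.Q, {n ∈ S | ρ n = q} := fun n hn =>
      Set.mem_iUnion.2 ⟨ρ n, hn, rfl⟩
    exact hS ((Set.finite_iUnion hcon).subset this)
  obtain ⟨n1, hn1⟩ := hq.nonempty
  obtain ⟨n2, hn2, hlt⟩ := hq.exists_gt n1
  obtain ⟨hn1S, hρn1⟩ := hn1
  obtain ⟨hn2S, hρn2⟩ := hn2
  have hqq : ρ n1 = ρ n2 := hρn1.trans hρn2.symm
  set p : ℕ := n2 - n1 with hpdef
  have hp : 0 < p := by omega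
  set u : List α := List.ofFn (fun i : Fin n1 => w i) with hudef
  set v : List α := List.ofFn (fun i : Fin p => w (n1 + i)) with hvdef
  have hv : 0 < v.length := by simp [hvdef, hp]
  set W : ℕ → α := finCat u (repWord v hv) with hWdef
  have hul : u.length = n1 := by simp [hudef]
  have hvl : v.length = p := by simp [hvdef]
  have hW : ∀ k, W k = w (if k < n1 then k else n1 + (k - n1) % p) := by
    intro k
    by_cases hk : k < n1
    · simp only [hWdef, finCat, hul, hk, dif_pos, if_pos]
      simp [hudef, List.get_ofFn]
    · simp only [hWdef, finCat, hul, hk, dif_neg, if_neg, not_false_iff, repWord]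
      simp [hvdef, List.get_ofFn, hvl]
  set ρ' : ℕ → A.Q := fun k => ρ (if k < n1 then k else n1 + (k - n1) % p) with hρ'def
  have hmod : ∀ k, ¬ k < n1 → ρ' (k + 1) = ρ (n1 + (k - n1) % p + 1) := by
    intro k hk
    have hkm : (k - n1) % p < p := Nat.mod_lt _ hp
    have h1 : ¬ k + 1 < n1 := by omega
    have h2 : (k + 1 - n1) % p = ((k - n1) % p + 1) % p := by
      have : k + 1 - n1 = (k - n1) + 1 := by omega
      rw [this]
      simp [Nat.add_mod]
    by_cases hm : (k - n1) % p + 1 < p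
    · simp only [hρ'def, h1, if_neg, not_false_iff, h2, Nat.mod_eq_of_lt hm,
        ← Nat.add_assoc]
    · have hm' : (k - n1) % p + 1 = p := by omega
      have h3 : ((k - n1) % p + 1) % p = 0 := by rw [hm']; exact Nat.mod_self p
      have h4 : n1 + (k - n1) % p + 1 = n2 := by omega
      simp only [hρ'def, h1, if_neg, not_false_iff, h2, h3, Nat.add_zero, h4]
      exact hqq
  have hρ'0 : ρ' 0 = A.init := by
    by_cases h0 : 0 < n1
    · simpa [hρ'def, h0] using hρ0
    · have : n1 = 0 := by omega
      simp [hρ'def, this, hρ0]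
  have htrans : ∀ n, ρ' (n + 1) ∈ A.trans (ρ' n) (W n) := by
    intro k
    by_cases hk : k < n1
    · rw [hW k, if_pos hk]
      by_cases hk1 : k + 1 < n1
      · simpa [hρ'def, hk, hk1] using hρt k
      · have : k + 1 = n1 := by omega
        have e : ρ' (k + 1) = ρ (k + 1) := by
          simp [hρ'def, hk1, this, Nat.sub_self]
        rw [e]
        simpa [hρ'def, hk] using hρt k
    · rw [hW k, if_neg hk, hmod k hk]
      have e : ρ' k = ρ (n1 + (k - n1) % p) := by simp [hρ'def, hk]
      rw [e]
      exact hρt (n1 + (k - n1) % p)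
  have hacc : ∀ N : ℕ, ∃ n, N ≤ n ∧ (ρ' n, W n, ρ' (n + 1)) ∈ A.acc := by
    intro N
    refine ⟨n1 + N * p, by nlinarith, ?_⟩
    have hk : ¬ n1 + N * p < n1 := by omega
    have hm0 : (n1 + N * p - n1) % p = 0 := by
      simp [Nat.add_sub_cancel_left, Nat.mul_mod_left]
    have e1 : ρ' (n1 + N * p) = ρ n1 := by simp [hρ'def, hk, hm0]
    have e2 : W (n1 + N * p) = w n1 := by rw [hW, if_neg hk, hm0, Nat.add_zero]
    have e3 : ρ' (n1 + N * p + 1) = ρ (n1 + 1) := by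
      rw [hmod _ hk, hm0]
    rw [e1, e2, e3]
    exact hn1S
  have hWL : W ∈ L := (hA W).2 ⟨ρ', hρ'0, htrans, hacc⟩
  exact ⟨W, hWL, u, v, hv, rfl⟩
end

section
/- Pumping of normalized decompositions: if u·v ∼ u and v̄ ≈ᵘ_L v where v̄ is a fixed representative, and the class of v̄ is final (i.e., u·v̄ ∼ u → u·v̄^ω ∈ L and this holds for all extensions: ∀ e ∈ Σ*, u·v̄·e ∼ u → u·(v̄·e)^ω ∈ L), then for every k ≥ 1, v̄ ≈ᵘ_L v^k, i.e., the k-fold repetition v^k lies in the same ≈ᵘ_L-class as v̄. -/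
/- Limit equivalence transfers finality of a class from `v̄` to `v`, and finality is stable under
right extension, so `vᵏ = v · vᵏ⁻¹` is final as well; two final words are limit equivalent. -/

def IsFinal {α : Type*} (L : Set (ℕ → α)) (u x : List α) : Prop :=
  ∀ e : List α, Leading L (u ++ x ++ e) u → OmegaIn L u (x ++ e)

theorem LimitRel.isFinal_iff {α : Type*} {L : Set (ℕ → α)} {u x y : List α}
    (h : LimitRel L u x y) : IsFinal L u x ↔ IsFinal L u y :=
  forall_congr' h

theorem limitRel_of_isFinal {α : Type*} {L : Set (ℕ → α)} {u x y : List α}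
    (hx : IsFinal L u x) (hy : IsFinal L u y) : LimitRel L u x y :=
  fun e => iff_of_true (hx e) (hy e)

theorem IsFinal.append {α : Type*} {L : Set (ℕ → α)} {u x : List α}
    (hx : IsFinal L u x) (y : List α) : IsFinal L u (x ++ y) := by
  intro e he
  simpa only [List.append_assoc] using hx (y ++ e) (by simpa only [List.append_assoc] using he)

theorem limitRel_pumping_general {α : Type*} (L : Set (ℕ → α)) (u v vb : List α)
    (hrep : LimitRel L u vb v)
    (hfinal : ∀ e : List α, Leading L (u ++ vb ++ e) u → OmegaIn L u (vb ++ e)) :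
    ∀ k : ℕ, 1 ≤ k → LimitRel L u vb (List.replicate k v).flatten := by
  intro k hk
  obtain ⟨n, rfl⟩ := Nat.exists_eq_add_of_le' hk
  have hv : IsFinal L u v := hrep.isFinal_iff.mp hfinal
  have hpow : (List.replicate (n + 1) v).flatten = v ++ (List.replicate n v).flatten := by
    rw [List.replicate_succ, List.flatten_cons]
  exact limitRel_of_isFinal hfinal (hpow ▸ hv.append _)

theorem limitRel_pumping {α : Type*} (L : Set (ℕ → α)) (u v vb : List α)
    (hnorm : Leading L (u ++ v) u) (hrep : LimitRel L u vb v)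
    (hfinal : ∀ e : List α, Leading L (u ++ vb ++ e) u → OmegaIn L u (vb ++ e)) :
    ∀ k : ℕ, 1 ≤ k → LimitRel L u vb (List.replicate k v).flatten :=
  limitRel_pumping_general L u v vb hrep hfinal
end
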